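/- arXiv:1507.08124 — 2 statements merged into one kernel-verified Lean document; each statement's English description precedes it below -/
import Mathlib

section
/- Let g ∈ L¹([0,1]), R > 0 and H_R ∈ L^∞([0,1]) such that |f(t,u)| ≤ H_R(t) for a.e. t and all u ∈ [−R,R], with ‖H_R‖_∞·(M₁ + M₂) ≤ R, where M₁ = sup_t ∫₀¹ k(t,s)|g(s)|ds and M₂ = sup_t ∫₀¹ |∂k/∂t(t,s)||g(s)|ds. Assume t ↦ f(t,u(t)) is measurable for each u in the closed ball B̄_R of C¹([0,1]). Then the operator Tu(t) = ∫₀¹ k(t,s)g(s)f(s,u(s))ds is well defined and maps B̄_R into B̄_R, where the norm on C¹([0,1]) is ‖u‖ = sup|u| + sup|u'|. -/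
open MeasureTheory intervalIntegral

/-- The Green's function for `u'' = 0` with separated boundary conditions. -/
noncomputable def greenK (α β γ δ : ℝ) (t s : ℝ) : ℝ :=
  if s ≤ t then (γ + δ - γ * t) * (β + α * s) / (γ * β + α * γ + α * δ)
  else (β + α * t) * (γ + δ - γ * s) / (γ * β + α * γ + α * δ)

/-- The partial derivative `∂k/∂t` of the Green's function, defined piecewise. -/
noncomputable def greenKt (α β γ δ : ℝ) (t s : ℝ) : ℝ :=
  if s < t then (-γ) * (β + α * s) / (γ * β + α * γ + α * δ)
  else α * (γ + δ - γ * s) / (γ * β + α * γ + α * δ)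

/-- The `C¹([0,1])` norm `‖u‖ = sup |u| + sup |u'|`. -/
noncomputable def normC1 (u : ℝ → ℝ) : ℝ :=
  sSup ((fun t => |u t|) '' Set.Icc (0 : ℝ) 1) +
    sSup ((fun t => |deriv u t|) '' Set.Icc (0 : ℝ) 1)

/-- Membership in the closed ball `B̄_R` of `C¹([0,1])`. -/
noncomputable def memBallC1 (R : ℝ) (u : ℝ → ℝ) : Prop :=
  ContinuousOn u (Set.Icc (0 : ℝ) 1) ∧
  (∀ t ∈ Set.Icc (0 : ℝ) 1, DifferentiableAt ℝ u t) ∧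
  ContinuousOn (deriv u) (Set.Icc (0 : ℝ) 1) ∧
  normC1 u ≤ R

/-- The constant `M₁ = sup_t ∫₀¹ k(t,s)|g(s)| ds`. -/
noncomputable def Mone (α β γ δ : ℝ) (g : ℝ → ℝ) : ℝ :=
  ⨆ t : Set.Icc (0 : ℝ) 1, ∫ s in (0 : ℝ)..1, greenK α β γ δ t s * |g s|

/-- The constant `M₂ = sup_t ∫₀¹ |∂k/∂t(t,s)||g(s)| ds`. -/
noncomputable def Mtwo (α β γ δ : ℝ) (g : ℝ → ℝ) : ℝ :=
  ⨆ t : Set.Icc (0 : ℝ) 1, ∫ s in (0 : ℝ)..1, |greenKt α β γ δ t s| * |g s|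

/-- The Hammerstein integral operator `Tu(t) = ∫₀¹ k(t,s) g(s) f(s,u(s)) ds`. -/
noncomputable def hammOp (α β γ δ : ℝ) (g : ℝ → ℝ) (f : ℝ → ℝ → ℝ)
    (u : ℝ → ℝ) : ℝ → ℝ :=
  fun t => ∫ s in (0 : ℝ)..1, greenK α β γ δ t s * g s * f s (u s)

/-!
With `a(s) = γ + δ - γ s` and `b(t) = β + α t` the solutions of `u'' = 0` satisfying the
boundary condition at `1` and at `0`, the Wronskian `a b' - a' b` is the constant `Γ`, so
`k(t, s) = b(t) a(s) / Γ - (t - s)⁺` and `∂k/∂t (t, s) = α a(s) / Γ - 1_{s < t}`. Hence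
`Tu(t) = b(t)/Γ · ∫ a w - ∫ (t - s)⁺ w(s) ds` with `w = g · f(·, u)`. The ramp `(t - s)⁺` is
`1`-Lipschitz in `t` and differentiable off the null set `s = t`, so the second term may be
differentiated under the integral sign, with continuous derivative `∫_{s < t} w`; thus `Tu` is
`C¹` with `(Tu)' = ∫ ∂k/∂t · w`. For `u ∈ B̄_R` we have `|w| ≤ ‖H_R‖_∞ |g|`, which bounds
`|Tu|` by `‖H_R‖_∞ M₁` (as `k ≥ 0`) and `|(Tu)'|` by `‖H_R‖_∞ M₂`.
-/

open Set Filter Topology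

section RampKernel

variable {μ : Measure ℝ} {w : ℝ → ℝ} {a b : ℝ}

theorem IntervalIntegrable.ite_lt (hw : IntervalIntegrable w μ a b) (t : ℝ) :
    IntervalIntegrable (fun s => if s < t then w s else 0) μ a b :=
  intervalIntegrable_iff.2 (hw.def'.indicator measurableSet_Iio)

theorem lipschitzWith_max_sub_mul (s c : ℝ) :
    LipschitzWith (Real.nnabs c) fun x => max (x - s) 0 * c := by
  refine LipschitzWith.of_dist_le_mul fun x y => ?_
  rw [Real.dist_eq, Real.dist_eq, ← sub_mul, abs_mul, Real.coe_nnabs, mul_comm]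
  exact mul_le_mul_of_nonneg_left
    ((abs_max_sub_max_le_abs _ _ 0).trans_eq (by rw [sub_sub_sub_cancel_right])) (abs_nonneg c)

theorem hasDerivAt_max_sub_mul {s t : ℝ} (hst : s ≠ t) (c : ℝ) :
    HasDerivAt (fun x => max (x - s) 0 * c) (if s < t then c else 0) t := by
  rcases hst.lt_or_gt with hst | hst
  · have hloc : (fun x => max (x - s) 0 * c) =ᶠ[𝓝 t] fun x => (x - s) * c :=
      (lt_mem_nhds hst).mono fun x hx => by simp only [max_eq_left (sub_nonneg.2 hx.le)]
    rw [if_pos hst]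
    simpa using (((hasDerivAt_id t).sub_const s).mul_const c).congr_of_eventuallyEq hloc
  · have hloc : (fun x => max (x - s) 0 * c) =ᶠ[𝓝 t] fun _ => 0 :=
      (gt_mem_nhds hst).mono fun x hx => by
        simp only [max_eq_right (sub_nonpos.2 hx.le), zero_mul]
    rw [if_neg hst.not_gt]
    exact (hasDerivAt_const t (0 : ℝ)).congr_of_eventuallyEq hloc

theorem continuousAt_ite_lt {s t : ℝ} (hst : s ≠ t) (c : ℝ) :
    ContinuousAt (fun x => if s < x then c else 0) t := by
  rcases hst.lt_or_gt with hst | hst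
  · exact continuousAt_const.congr ((lt_mem_nhds hst).mono fun x hx => (if_pos hx).symm)
  · exact continuousAt_const.congr ((gt_mem_nhds hst).mono fun x hx => (if_neg hx.not_gt).symm)

variable [NullSingletonClass μ]

theorem hasDerivAt_integral_max_sub_mul (hw : IntervalIntegrable w μ a b) (t : ℝ) :
    HasDerivAt (fun x => ∫ s in a..b, max (x - s) 0 * w s ∂μ)
      (∫ s in a..b, (if s < t then w s else 0) ∂μ) t := by
  refine (intervalIntegral.hasDerivAt_integral_of_dominated_loc_of_lip (bound := w) univ_mem
    ?_ ?_ (hw.ite_lt t).def'.1 ?_ hw ?_).2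
  · exact Eventually.of_forall fun x =>
      (by fun_prop : Continuous fun s => max (x - s) 0).aestronglyMeasurable.mul hw.def'.1
  · exact hw.continuousOn_mul (by fun_prop : Continuous fun s => max (t - s) 0).continuousOn
  · exact ae_of_all _ fun s _ => (lipschitzWith_max_sub_mul s (w s)).lipschitzOnWith
  · filter_upwards [μ.ae_ne t] with s hst _
    exact hasDerivAt_max_sub_mul hst (w s)

theorem continuous_integral_ite_lt (hw : IntervalIntegrable w μ a b) :
    Continuous fun t => ∫ s in a..b, (if s < t then w s else 0) ∂μ := by
  refine continuous_iff_continuousAt.2 fun t =>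
    intervalIntegral.continuousAt_of_dominated_interval (bound := fun s => ‖w s‖)
      (Eventually.of_forall fun x => (hw.ite_lt x).def'.1) ?_ hw.norm ?_
  · refine Eventually.of_forall fun x => ae_of_all _ fun s _ => ?_
    split_ifs <;> simp
  · filter_upwards [μ.ae_ne t] with s hst _
    exact continuousAt_ite_lt hst (w s)

end RampKernel

theorem abs_intervalIntegral_mul_le {μ : Measure ℝ} {κ w g : ℝ → ℝ} {a b C : ℝ} (hab : a ≤ b)
    (hκg : IntervalIntegrable (fun s => κ s * g s) μ a b)
    (hwg : ∀ᵐ s ∂μ, s ∈ Ioc a b → |w s| ≤ C * |g s|) :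
    |∫ s in a..b, κ s * w s ∂μ| ≤ C * ∫ s in a..b, |κ s| * |g s| ∂μ := by
  rw [← Real.norm_eq_abs, ← intervalIntegral.integral_const_mul C]
  refine intervalIntegral.norm_integral_le_of_norm_le hab ?_ ?_
  · filter_upwards [hwg] with s hs hmem
    rw [Real.norm_eq_abs, abs_mul, mul_left_comm]
    exact mul_le_mul_of_nonneg_left (hs hmem) (abs_nonneg _)
  · simpa only [abs_mul] using hκg.abs.const_mul C

theorem IsCompact.le_iSup_of_continuousOn {X : Type*} [TopologicalSpace X] {K : Set X}
    (hK : IsCompact K) {F : X → ℝ} (hF : ContinuousOn F K) {t : X} (ht : t ∈ K) :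
    F t ≤ ⨆ x : K, F x :=
  le_ciSup ((hK.bddAbove_image hF).mono (range_subset_iff.2 fun x => mem_image_of_mem F x.2))
    (⟨t, ht⟩ : K)

theorem abs_le_normC1 {u : ℝ → ℝ} (hu : ContinuousOn u (Icc 0 1)) {t : ℝ}
    (ht : t ∈ Icc (0 : ℝ) 1) : |u t| ≤ normC1 u :=
  le_add_of_le_of_nonneg (le_csSup (isCompact_Icc.bddAbove_image hu.abs) ⟨t, ht, rfl⟩)
    (Real.sSup_nonneg (by rintro _ ⟨x, _, rfl⟩; exact abs_nonneg _))

theorem normC1_le {u : ℝ → ℝ} {A B : ℝ} (hu : ∀ t ∈ Icc (0 : ℝ) 1, |u t| ≤ A)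
    (hu' : ∀ t ∈ Icc (0 : ℝ) 1, |deriv u t| ≤ B) : normC1 u ≤ A + B := by
  have hne : (Icc (0 : ℝ) 1).Nonempty := nonempty_Icc.2 zero_le_one
  exact add_le_add (csSup_le (hne.image _) (by rintro _ ⟨t, ht, rfl⟩; exact hu t ht))
    (csSup_le (hne.image _) (by rintro _ ⟨t, ht, rfl⟩; exact hu' t ht))

theorem abs_le_of_memBallC1 {R : ℝ} {u : ℝ → ℝ} (hu : memBallC1 R u) {t : ℝ}
    (ht : t ∈ Icc (0 : ℝ) 1) : |u t| ≤ R :=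
  (abs_le_normC1 hu.1 ht).trans hu.2.2.2

section GreenKernel

variable {α β γ δ : ℝ}

local notation "Γ" => γ * β + α * γ + α * δ

theorem greenK_eq_sub (hΓ : Γ ≠ 0) (t s : ℝ) :
    greenK α β γ δ t s = (β + α * t) * (γ + δ - γ * s) / Γ - max (t - s) 0 := by
  unfold greenK
  split_ifs with h
  · rw [max_eq_left (sub_nonneg.2 h), eq_sub_iff_add_eq, div_add' _ _ _ hΓ]
    congr 1
    ring
  · rw [max_eq_right (by linarith), sub_zero]

theorem greenKt_eq_sub (hΓ : Γ ≠ 0) (t s : ℝ) :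
    greenKt α β γ δ t s = α * (γ + δ - γ * s) / Γ - if s < t then 1 else 0 := by
  unfold greenKt
  split_ifs
  · rw [eq_sub_iff_add_eq, div_add' _ _ _ hΓ]
    congr 1
    ring
  · rw [sub_zero]

theorem greenK_nonneg (hα : 0 ≤ α) (hβ : 0 ≤ β) (hγ : 0 ≤ γ) (hδ : 0 ≤ δ) (hΓ : 0 < Γ)
    {t s : ℝ} (ht : t ∈ Icc (0 : ℝ) 1) (hs : s ∈ Icc (0 : ℝ) 1) : 0 ≤ greenK α β γ δ t s := by
  obtain ⟨ht0, ht1⟩ := ht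
  obtain ⟨hs0, hs1⟩ := hs
  unfold greenK
  split_ifs <;> exact div_nonneg (mul_nonneg (by nlinarith) (by nlinarith)) hΓ.le

theorem abs_greenKt_le (hΓ : Γ ≠ 0) (t s : ℝ) :
    |greenKt α β γ δ t s| ≤ |α * (γ + δ - γ * s) / Γ| + 1 := by
  rw [greenKt_eq_sub hΓ]
  refine (abs_sub _ _).trans ?_
  gcongr
  split_ifs <;> simp

variable {μ : Measure ℝ} {w : ℝ → ℝ} {a b : ℝ}

theorem intervalIntegrable_greenK_mul (hΓ : Γ ≠ 0) (hw : IntervalIntegrable w μ a b) (t : ℝ) :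
    IntervalIntegrable (fun s => greenK α β γ δ t s * w s) μ a b := by
  simp_rw [greenK_eq_sub hΓ]
  exact hw.continuousOn_mul (by fun_prop : Continuous _).continuousOn

theorem intervalIntegrable_greenKt_mul (hΓ : Γ ≠ 0) (hw : IntervalIntegrable w μ a b) (t : ℝ) :
    IntervalIntegrable (fun s => greenKt α β γ δ t s * w s) μ a b := by
  simp_rw [greenKt_eq_sub hΓ, sub_mul, ite_mul, one_mul, zero_mul]
  exact (hw.continuousOn_mul (by fun_prop : Continuous _).continuousOn).sub (hw.ite_lt t)

theorem integral_greenK_mul (hΓ : Γ ≠ 0) (hw : IntervalIntegrable w μ a b) (t : ℝ) :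
    ∫ s in a..b, greenK α β γ δ t s * w s ∂μ =
      (β + α * t) / Γ * ∫ s in a..b, (γ + δ - γ * s) * w s ∂μ -
        ∫ s in a..b, max (t - s) 0 * w s ∂μ := by
  rw [← intervalIntegral.integral_const_mul, ← intervalIntegral.integral_sub
    ((hw.continuousOn_mul (by fun_prop : Continuous _).continuousOn).const_mul _)
    (hw.continuousOn_mul (by fun_prop : Continuous _).continuousOn)]
  refine intervalIntegral.integral_congr fun s _ => ?_
  rw [greenK_eq_sub hΓ]
  ring

theorem integral_greenKt_mul (hΓ : Γ ≠ 0) (hw : IntervalIntegrable w μ a b) (t : ℝ) :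
    ∫ s in a..b, greenKt α β γ δ t s * w s ∂μ =
      α / Γ * ∫ s in a..b, (γ + δ - γ * s) * w s ∂μ -
        ∫ s in a..b, (if s < t then w s else 0) ∂μ := by
  rw [← intervalIntegral.integral_const_mul, ← intervalIntegral.integral_sub
    ((hw.continuousOn_mul (by fun_prop : Continuous _).continuousOn).const_mul _) (hw.ite_lt t)]
  refine intervalIntegral.integral_congr fun s _ => ?_
  rw [greenKt_eq_sub hΓ]
  split_ifs <;> ring

variable [NullSingletonClass μ]

theorem hasDerivAt_integral_greenK_mul (hΓ : Γ ≠ 0) (hw : IntervalIntegrable w μ a b) (t : ℝ) :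
    HasDerivAt (fun x => ∫ s in a..b, greenK α β γ δ x s * w s ∂μ)
      (∫ s in a..b, greenKt α β γ δ t s * w s ∂μ) t := by
  simp_rw [integral_greenK_mul hΓ hw, integral_greenKt_mul hΓ hw]
  refine HasDerivAt.sub ?_ (hasDerivAt_integral_max_sub_mul hw t)
  simpa using ((((hasDerivAt_id t).const_mul α).const_add β).div_const Γ).mul_const
    (∫ s in a..b, (γ + δ - γ * s) * w s ∂μ)

theorem continuous_integral_greenKt_mul (hΓ : Γ ≠ 0) (hw : IntervalIntegrable w μ a b) :
    Continuous fun t => ∫ s in a..b, greenKt α β γ δ t s * w s ∂μ := by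
  simp_rw [integral_greenKt_mul hΓ hw]
  exact continuous_const.sub (continuous_integral_ite_lt hw)

variable {g : ℝ → ℝ} {C : ℝ}

theorem abs_integral_greenK_mul_le_Mone (hα : 0 ≤ α) (hβ : 0 ≤ β) (hγ : 0 ≤ γ) (hδ : 0 ≤ δ)
    (hΓ : 0 < Γ) (hg : IntervalIntegrable g volume 0 1)
    (hwg : ∀ᵐ s, s ∈ Ioc (0 : ℝ) 1 → |w s| ≤ C * |g s|) (hC : 0 ≤ C) {t : ℝ}
    (ht : t ∈ Icc (0 : ℝ) 1) :
    |∫ s in (0 : ℝ)..1, greenK α β γ δ t s * w s| ≤ C * Mone α β γ δ g := by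
  have hcont : Continuous fun x => ∫ s in (0 : ℝ)..1, greenK α β γ δ x s * |g s| :=
    continuous_iff_continuousAt.2 fun x =>
      (hasDerivAt_integral_greenK_mul hΓ.ne' hg.abs x).continuousAt
  calc _ ≤ C * ∫ s in (0 : ℝ)..1, |greenK α β γ δ t s| * |g s| :=
        abs_intervalIntegral_mul_le zero_le_one (intervalIntegrable_greenK_mul hΓ.ne' hg t) hwg
    _ = C * ∫ s in (0 : ℝ)..1, greenK α β γ δ t s * |g s| := by
        refine congrArg _ (intervalIntegral.integral_congr fun s hs => ?_)
        rw [uIcc_of_le zero_le_one] at hs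
        rw [abs_of_nonneg (greenK_nonneg hα hβ hγ hδ hΓ ht hs)]
    _ ≤ C * Mone α β γ δ g :=
        mul_le_mul_of_nonneg_left (isCompact_Icc.le_iSup_of_continuousOn hcont.continuousOn ht) hC

theorem abs_integral_greenKt_mul_le_Mtwo (hΓ : Γ ≠ 0) (hg : IntervalIntegrable g volume 0 1)
    (hwg : ∀ᵐ s, s ∈ Ioc (0 : ℝ) 1 → |w s| ≤ C * |g s|) (hC : 0 ≤ C) {t : ℝ}
    (ht : t ∈ Icc (0 : ℝ) 1) :
    |∫ s in (0 : ℝ)..1, greenKt α β γ δ t s * w s| ≤ C * Mtwo α β γ δ g := by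
  have hbdd : BddAbove (range fun x : Icc (0 : ℝ) 1 =>
      ∫ s in (0 : ℝ)..1, |greenKt α β γ δ x s| * |g s|) := by
    refine ⟨∫ s in (0 : ℝ)..1, (|α * (γ + δ - γ * s) / Γ| + 1) * |g s|, ?_⟩
    rintro _ ⟨x, rfl⟩
    refine (Real.le_norm_self _).trans (intervalIntegral.norm_integral_le_of_norm_le zero_le_one
      (ae_of_all _ fun s _ => ?_) (hg.abs.continuousOn_mul
        (by fun_prop : Continuous fun s => |α * (γ + δ - γ * s) / Γ| + 1).continuousOn))
    rw [Real.norm_eq_abs, abs_mul, abs_abs, abs_abs]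
    exact mul_le_mul_of_nonneg_right (abs_greenKt_le hΓ x s) (abs_nonneg _)
  calc _ ≤ C * ∫ s in (0 : ℝ)..1, |greenKt α β γ δ t s| * |g s| :=
        abs_intervalIntegral_mul_le zero_le_one (intervalIntegrable_greenKt_mul hΓ hg t) hwg
    _ ≤ C * Mtwo α β γ δ g :=
        mul_le_mul_of_nonneg_left (le_ciSup hbdd (⟨t, ht⟩ : Icc (0 : ℝ) 1)) hC

theorem memBallC1_integral_greenK_mul {R : ℝ} (hα : 0 ≤ α) (hβ : 0 ≤ β) (hγ : 0 ≤ γ)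
    (hδ : 0 ≤ δ) (hΓ : 0 < Γ) (hg : IntervalIntegrable g volume 0 1)
    (hw : IntervalIntegrable w volume 0 1)
    (hwg : ∀ᵐ s, s ∈ Ioc (0 : ℝ) 1 → |w s| ≤ C * |g s|) (hC : 0 ≤ C)
    (hCR : C * (Mone α β γ δ g + Mtwo α β γ δ g) ≤ R) :
    memBallC1 R fun t => ∫ s in (0 : ℝ)..1, greenK α β γ δ t s * w s := by
  have hT := hasDerivAt_integral_greenK_mul hΓ.ne' hw
  have hT' : deriv (fun t => ∫ s in (0 : ℝ)..1, greenK α β γ δ t s * w s) =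
      fun t => ∫ s in (0 : ℝ)..1, greenKt α β γ δ t s * w s :=
    funext fun t => (hT t).deriv
  refine ⟨(continuous_iff_continuousAt.2 fun t => (hT t).continuousAt).continuousOn,
    fun t _ => (hT t).differentiableAt,
    hT' ▸ (continuous_integral_greenKt_mul hΓ.ne' hw).continuousOn,
    (normC1_le (fun t ht => ?_) (fun t ht => ?_)).trans (mul_add C _ _ ▸ hCR)⟩
  · exact abs_integral_greenK_mul_le_Mone hα hβ hγ hδ hΓ hg hwg hC ht
  · exact hT' ▸ abs_integral_greenKt_mul_le_Mtwo hΓ.ne' hg hwg hC ht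

end GreenKernel

theorem hammOp_well_defined_maps_ball_general
    (α β γ δ : ℝ) (hα : 0 ≤ α) (hβ : 0 ≤ β) (hγ : 0 ≤ γ) (hδ : 0 ≤ δ)
    (hΓ : 0 < γ * β + α * γ + α * δ)
    (g : ℝ → ℝ) (f : ℝ → ℝ → ℝ) (R : ℝ)
    (H : ℝ → ℝ) (CH : ℝ)
    -- (H₁)
    (hg : IntegrableOn g (Set.Icc (0 : ℝ) 1))
    -- (H₂): `H` is an `L^∞` bound for `f` on `[-R, R]`
    (hH : ∀ᵐ t ∂(volume.restrict (Set.Icc (0 : ℝ) 1)),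
      ∀ x ∈ Set.Icc (-R) R, |f t x| ≤ H t)
    (hHC : ∀ᵐ t ∂(volume.restrict (Set.Icc (0 : ℝ) 1)), |H t| ≤ CH)
    -- (H₃): `‖H‖_∞ (M₁ + M₂) ≤ R`
    (hRC : CH * (Mone α β γ δ g + Mtwo α β γ δ g) ≤ R)
    -- (H₄)
    (hmeas : ∀ u : ℝ → ℝ, memBallC1 R u →
      AEMeasurable (fun t => f t (u t)) (volume.restrict (Set.Icc (0 : ℝ) 1))) :
    ∀ u : ℝ → ℝ, memBallC1 R u →
      (∀ t ∈ Set.Icc (0 : ℝ) 1,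
        IntervalIntegrable (fun s => greenK α β γ δ t s * g s * f s (u s))
          volume 0 1) ∧
      memBallC1 R (hammOp α β γ δ g f u) := by
  intro u hu
  have hCH : 0 ≤ CH := by
    have := ae_restrict_neBot.2 (by simp : volume (Icc (0 : ℝ) 1) ≠ 0)
    obtain ⟨t, ht⟩ := hHC.exists
    exact (abs_nonneg _).trans ht
  set w := fun s => g s * f s (u s)
  have hw_le : ∀ᵐ s ∂(volume.restrict (Icc (0 : ℝ) 1)), |w s| ≤ CH * |g s| := by
    filter_upwards [hH, hHC, ae_restrict_mem measurableSet_Icc] with s hfH hHs hs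
    rw [abs_mul, mul_comm]
    exact mul_le_mul_of_nonneg_right
      ((hfH _ (abs_le.1 (abs_le_of_memBallC1 hu hs))).trans ((le_abs_self _).trans hHs))
      (abs_nonneg _)
  have hwg : ∀ᵐ s, s ∈ Ioc (0 : ℝ) 1 → |w s| ≤ CH * |g s| :=
    ((ae_restrict_iff' measurableSet_Icc).1 hw_le).mono fun s h hs => h (Ioc_subset_Icc_self hs)
  have hg' : IntervalIntegrable g volume 0 1 :=
    (intervalIntegrable_iff_integrableOn_Icc_of_le zero_le_one).2 hg
  have hw : IntervalIntegrable w volume 0 1 :=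
    (intervalIntegrable_iff_integrableOn_Icc_of_le zero_le_one).2 <|
      (hg.norm.const_mul CH).mono' (hg.aemeasurable.mul (hmeas u hu)).aestronglyMeasurable hw_le
  have hT : hammOp α β γ δ g f u = fun t => ∫ s in (0 : ℝ)..1, greenK α β γ δ t s * w s := by
    funext t
    simp only [hammOp, mul_assoc, w]
  exact ⟨fun t _ => by simpa only [mul_assoc] using intervalIntegrable_greenK_mul hΓ.ne' hw t,
    hT ▸ memBallC1_integral_greenK_mul hα hβ hγ hδ hΓ hg' hw hwg hCH hRC⟩

theorem hammOp_well_defined_maps_ball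
    (α β γ δ : ℝ) (hα : 0 ≤ α) (hβ : 0 ≤ β) (hγ : 0 ≤ γ) (hδ : 0 ≤ δ)
    (hΓ : 0 < γ * β + α * γ + α * δ)
    (g : ℝ → ℝ) (f : ℝ → ℝ → ℝ) (R : ℝ) (hR : 0 < R)
    (H : ℝ → ℝ) (CH : ℝ)
    -- (H₁)
    (hg : IntegrableOn g (Set.Icc (0 : ℝ) 1))
    -- (H₂): `H` is an `L^∞` bound for `f` on `[-R, R]`
    (hHmeas : Measurable H)
    (hH : ∀ᵐ t ∂(volume.restrict (Set.Icc (0 : ℝ) 1)),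
      ∀ x ∈ Set.Icc (-R) R, |f t x| ≤ H t)
    (hHC : ∀ᵐ t ∂(volume.restrict (Set.Icc (0 : ℝ) 1)), |H t| ≤ CH)
    -- (H₃): `‖H‖_∞ (M₁ + M₂) ≤ R`
    (hRC : CH * (Mone α β γ δ g + Mtwo α β γ δ g) ≤ R)
    -- (H₄)
    (hmeas : ∀ u : ℝ → ℝ, memBallC1 R u →
      AEMeasurable (fun t => f t (u t)) (volume.restrict (Set.Icc (0 : ℝ) 1))) :
    ∀ u : ℝ → ℝ, memBallC1 R u →
      (∀ t ∈ Set.Icc (0 : ℝ) 1,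
        IntervalIntegrable (fun s => greenK α β γ δ t s * g s * f s (u s))
          volume 0 1) ∧
      memBallC1 R (hammOp α β γ δ g f u) :=
  hammOp_well_defined_maps_ball_general α β γ δ hα hβ hγ hδ hΓ g f R H CH hg hH hHC hRC hmeas
end

section
/- Let λ ∈ (0,1), g(t) = 1/√t, and f(t,u) = −φ^λ(n(t,u)) with n(t,u) and φ as in the example. For each k ≥ 1 the curves γ_k(t) = k√t and γ̂_k(t) = −t/(k+1) are inviable discontinuity curves for the equation u'' + g(t)f(t,u) = 0 on any [a,b] ⊆ (0,1]: there exists ψ ∈ L¹ nonnegative and ε > 0 with −γ''(t) − ψ(t) > g(t)f(t,y) for a.e. t and all y with |y − γ(t)| ≤ ε. In particular, −γ_k''(t) = k/(4t^{3/2}) > 0 and −γ̂_k''(t) = 0, while g(t)f(t,y) ≤ −2^λ/√t ≤ −2^λ for all relevant y. -/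
open MeasureTheory

/-- `φ(1) = 2` and, for `n ≥ 2`, `φ(n)` is the number of divisors of `n`. -/
def phiFun (n : ℕ) : ℕ := if n = 1 then 2 else n.divisors.card

/-- The piecewise index function `n(t,u)` of the example:
`n(t,u) = 1` if `u < -t`; `n(t,u) = n` if `-t/n ≤ u < -t/(n+1)` and `-t ≤ u < 0`
(equivalently `n = ⌊t/(-u)⌋`); and `n(t,u) = n` if `(n-1)√t ≤ u < n√t` and
`u ≥ 0` (equivalently `n = ⌊u/√t⌋ + 1`). -/
noncomputable def nFun (t u : ℝ) : ℕ :=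
  if u < -t then 1
  else if u < 0 then ⌊t / (-u)⌋₊
  else ⌊u / Real.sqrt t⌋₊ + 1

/-! Since `φ ≥ 2` on the values of `n(t,·)`, the nonlinearity satisfies
`g(t) f(t,y) ≤ -2^λ/√t ≤ -2^λ < 0` on `(0,1]`, whereas `-γ_k'' > 0` and `-γ̂_k'' = 0`.
So the inviability inequality holds with `ψ = 0` and any `ε`. -/

/-- A curve `γ` with `-γ'' = c` is inviable on `s` for the equation `u'' + F(t,u) = 0`. -/
def IsInviableOn (s : Set ℝ) (γ c : ℝ → ℝ) (F : ℝ → ℝ → ℝ) : Prop :=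
  ∃ ψ : ℝ → ℝ, IntegrableOn ψ s ∧ (∀ t, 0 ≤ ψ t) ∧
    ∃ ε > (0 : ℝ), ∀ᵐ t ∂(volume.restrict s), ∀ y : ℝ, |y - γ t| ≤ ε → c t - ψ t > F t y

theorem isInviableOn_of_forall_lt {s : Set ℝ} (hs : MeasurableSet s) {γ c : ℝ → ℝ}
    {F : ℝ → ℝ → ℝ} (h : ∀ t ∈ s, ∀ y, F t y < c t) : IsInviableOn s γ c F :=
  ⟨0, integrableOn_zero, fun _ => le_rfl, 1, one_pos,
    ae_restrict_of_forall_mem hs fun t ht y _ => by simpa using h t ht y⟩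

theorem one_le_nFun (t u : ℝ) : 1 ≤ nFun t u := by
  unfold nFun
  split_ifs with h_lt h_neg
  · rfl
  · have hu : 0 < -u := neg_pos.mpr h_neg
    exact Nat.le_floor <| by
      rw [Nat.cast_one, le_div_iff₀ hu]
      linarith [not_lt.mp h_lt]
  · exact Nat.le_add_left 1 _

theorem two_le_phiFun {n : ℕ} (hn : n ≠ 0) : 2 ≤ phiFun n := by
  unfold phiFun
  split_ifs with h_one
  · rfl
  · exact Finset.one_lt_card.mpr ⟨1, Nat.one_mem_divisors.mpr hn, n,
      Nat.mem_divisors_self n hn, Ne.symm h_one⟩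

theorem two_rpow_le_phiFun_nFun_rpow {lam : ℝ} (hlam : 0 ≤ lam) (t u : ℝ) :
    (2 : ℝ) ^ lam ≤ (phiFun (nFun t u) : ℝ) ^ lam := by
  have h := two_le_phiFun (Nat.one_le_iff_ne_zero.mp (one_le_nFun t u))
  exact Real.rpow_le_rpow zero_le_two (by exact_mod_cast h) hlam

theorem neg_rpow_phiFun_nFun_div_sqrt_le {lam t : ℝ} (hlam : 0 ≤ lam) (ht : 0 < t) (u : ℝ) :
    1 / Real.sqrt t * -((phiFun (nFun t u) : ℝ) ^ lam) ≤ -((2 : ℝ) ^ lam) / Real.sqrt t := by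
  rw [one_div_mul_eq_div, div_le_div_iff_of_pos_right (Real.sqrt_pos.mpr ht), neg_le_neg_iff]
  exact two_rpow_le_phiFun_nFun_rpow hlam t u

theorem neg_div_sqrt_le_neg {c t : ℝ} (hc : 0 ≤ c) (ht : 0 < t) (ht1 : t ≤ 1) :
    -c / Real.sqrt t ≤ -c := by
  rw [neg_div, neg_le_neg_iff]
  exact le_div_self hc (Real.sqrt_pos.mpr ht) (Real.sqrt_le_one.mpr ht1)

theorem hasDerivAt_const_div_two_sqrt (c : ℝ) {t : ℝ} (ht : 0 < t) :
    HasDerivAt (fun x => c / (2 * Real.sqrt x)) (-(c / (4 * t ^ ((3 : ℝ) / 2)))) t := by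
  have h32 : t ^ ((3 : ℝ) / 2) = t * Real.sqrt t := by
    rw [show (3 : ℝ) / 2 = 1 + 1 / 2 by norm_num, Real.rpow_add ht, Real.rpow_one,
      Real.sqrt_eq_rpow]
  refine ((hasDerivAt_const t c).div ((Real.hasDerivAt_sqrt ht.ne').const_mul 2)
    (by positivity)).congr_deriv ?_
  rw [h32]
  field_simp
  rw [Real.sq_sqrt ht.le]
  ring

theorem example_curves_inviable_general
    (lam : ℝ) (hlam : lam ∈ Set.Ioo (0 : ℝ) 1)
    (g : ℝ → ℝ) (hg : ∀ t, g t = 1 / Real.sqrt t)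
    (f : ℝ → ℝ → ℝ) (hf : ∀ t u, f t u = -((phiFun (nFun t u) : ℝ) ^ lam))
    (k : ℕ) (hk : 1 ≤ k)
    (a b : ℝ) (ha : 0 < a) (hb : b ≤ 1) :
    -- derivative facts: `γ_k(t) = k√t` has `γ_k'(t) = k/(2√t)` and
    -- `-γ_k''(t) = k/(4 t^{3/2}) > 0`; `γ̂_k(t) = -t/(k+1)` has `γ̂_k'' = 0`
    (∀ t ∈ Set.Icc a b,
      HasDerivAt (fun x => (k : ℝ) * Real.sqrt x) ((k : ℝ) / (2 * Real.sqrt t)) t ∧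
      HasDerivAt (fun x => (k : ℝ) / (2 * Real.sqrt x))
        (-((k : ℝ) / (4 * t ^ ((3 : ℝ) / 2)))) t ∧
      0 < (k : ℝ) / (4 * t ^ ((3 : ℝ) / 2)) ∧
      HasDerivAt (fun x => -x / ((k : ℝ) + 1)) (-1 / ((k : ℝ) + 1)) t ∧
      HasDerivAt (fun _ : ℝ => -1 / ((k : ℝ) + 1)) 0 t) ∧
    -- the uniform bound `g(t) f(t,y) ≤ -2^λ/√t ≤ -2^λ`
    (∀ t ∈ Set.Icc a b, ∀ y : ℝ,
      g t * f t y ≤ -((2 : ℝ) ^ lam) / Real.sqrt t ∧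
      -((2 : ℝ) ^ lam) / Real.sqrt t ≤ -((2 : ℝ) ^ lam)) ∧
    -- inviability of `γ_k(t) = k√t`
    (∃ ψ : ℝ → ℝ, IntegrableOn ψ (Set.Icc a b) ∧ (∀ t, 0 ≤ ψ t) ∧
      ∃ ε > (0 : ℝ), ∀ᵐ t ∂(volume.restrict (Set.Icc a b)),
        ∀ y : ℝ, |y - (k : ℝ) * Real.sqrt t| ≤ ε →
          (k : ℝ) / (4 * t ^ ((3 : ℝ) / 2)) - ψ t > g t * f t y) ∧
    -- inviability of `γ̂_k(t) = -t/(k+1)`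
    (∃ ψ : ℝ → ℝ, IntegrableOn ψ (Set.Icc a b) ∧ (∀ t, 0 ≤ ψ t) ∧
      ∃ ε > (0 : ℝ), ∀ᵐ t ∂(volume.restrict (Set.Icc a b)),
        ∀ y : ℝ, |y - (-t / ((k : ℝ) + 1))| ≤ ε →
          (0 : ℝ) - ψ t > g t * f t y) := by
  have hpos : ∀ t ∈ Set.Icc a b, 0 < t := fun t ht => ha.trans_le ht.1
  have hcurv : ∀ t ∈ Set.Icc a b, 0 < (k : ℝ) / (4 * t ^ ((3 : ℝ) / 2)) := fun t ht => by
    have := hpos t ht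
    have : (0 : ℝ) < k := by exact_mod_cast hk
    positivity
  have hbound : ∀ t ∈ Set.Icc a b, ∀ y : ℝ,
      g t * f t y ≤ -((2 : ℝ) ^ lam) / Real.sqrt t ∧
      -((2 : ℝ) ^ lam) / Real.sqrt t ≤ -((2 : ℝ) ^ lam) := fun t ht y => by
    rw [hg, hf]
    exact ⟨neg_rpow_phiFun_nFun_div_sqrt_le hlam.1.le (hpos t ht) y,
      neg_div_sqrt_le_neg (by positivity) (hpos t ht) (ht.2.trans hb)⟩
  have hneg : ∀ t ∈ Set.Icc a b, ∀ y, g t * f t y < 0 := fun t ht y =>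
    ((hbound t ht y).1.trans (hbound t ht y).2).trans_lt (neg_lt_zero.mpr (by positivity))
  refine ⟨fun t ht => ⟨((Real.hasDerivAt_sqrt (hpos t ht).ne').const_mul (k : ℝ)).congr_deriv
      (by ring), hasDerivAt_const_div_two_sqrt k (hpos t ht), hcurv t ht,
      (hasDerivAt_neg t).div_const _, hasDerivAt_const t _⟩, hbound,
    isInviableOn_of_forall_lt measurableSet_Icc fun t ht y => (hneg t ht y).trans (hcurv t ht),
    isInviableOn_of_forall_lt measurableSet_Icc hneg⟩

theorem example_curves_inviable
    (lam : ℝ) (hlam : lam ∈ Set.Ioo (0 : ℝ) 1)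
    (g : ℝ → ℝ) (hg : ∀ t, g t = 1 / Real.sqrt t)
    (f : ℝ → ℝ → ℝ) (hf : ∀ t u, f t u = -((phiFun (nFun t u) : ℝ) ^ lam))
    (k : ℕ) (hk : 1 ≤ k)
    (a b : ℝ) (ha : 0 < a) (hab : a ≤ b) (hb : b ≤ 1) :
    -- derivative facts: `γ_k(t) = k√t` has `γ_k'(t) = k/(2√t)` and
    -- `-γ_k''(t) = k/(4 t^{3/2}) > 0`; `γ̂_k(t) = -t/(k+1)` has `γ̂_k'' = 0`
    (∀ t ∈ Set.Icc a b,
      HasDerivAt (fun x => (k : ℝ) * Real.sqrt x) ((k : ℝ) / (2 * Real.sqrt t)) t ∧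
      HasDerivAt (fun x => (k : ℝ) / (2 * Real.sqrt x))
        (-((k : ℝ) / (4 * t ^ ((3 : ℝ) / 2)))) t ∧
      0 < (k : ℝ) / (4 * t ^ ((3 : ℝ) / 2)) ∧
      HasDerivAt (fun x => -x / ((k : ℝ) + 1)) (-1 / ((k : ℝ) + 1)) t ∧
      HasDerivAt (fun _ : ℝ => -1 / ((k : ℝ) + 1)) 0 t) ∧
    -- the uniform bound `g(t) f(t,y) ≤ -2^λ/√t ≤ -2^λ`
    (∀ t ∈ Set.Icc a b, ∀ y : ℝ,
      g t * f t y ≤ -((2 : ℝ) ^ lam) / Real.sqrt t ∧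
      -((2 : ℝ) ^ lam) / Real.sqrt t ≤ -((2 : ℝ) ^ lam)) ∧
    -- inviability of `γ_k(t) = k√t`
    (∃ ψ : ℝ → ℝ, IntegrableOn ψ (Set.Icc a b) ∧ (∀ t, 0 ≤ ψ t) ∧
      ∃ ε > (0 : ℝ), ∀ᵐ t ∂(volume.restrict (Set.Icc a b)),
        ∀ y : ℝ, |y - (k : ℝ) * Real.sqrt t| ≤ ε →
          (k : ℝ) / (4 * t ^ ((3 : ℝ) / 2)) - ψ t > g t * f t y) ∧
    -- inviability of `γ̂_k(t) = -t/(k+1)`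
    (∃ ψ : ℝ → ℝ, IntegrableOn ψ (Set.Icc a b) ∧ (∀ t, 0 ≤ ψ t) ∧
      ∃ ε > (0 : ℝ), ∀ᵐ t ∂(volume.restrict (Set.Icc a b)),
        ∀ y : ℝ, |y - (-t / ((k : ℝ) + 1))| ≤ ε →
          (0 : ℝ) - ψ t > g t * f t y) :=
  example_curves_inviable_general lam hlam g hg f hf k hk a b ha hb
end
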